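/- There exists a four-player partnership domino game ending blocked in which the winning team scores exactly 107 points. -/

import Mathlib

/-- A domino tile is an unordered pair of values in `{0,…,6}`. -/
abbrev Tile := Sym2 (Fin 7)

/-- The pip sum of the tile `[a,b]` is `a + b`. -/
def pips (t : Tile) : ℕ :=
  Sym2.lift ⟨fun (a b : Fin 7) => (a : ℕ) + (b : ℕ), fun a b => Nat.add_comm a b⟩ t

/-- The board: the chain of already played tiles, as a list of oriented tiles
concatenated left to right (consecutive tiles match end to end). -/
abbrev Board := List (Fin 7 × Fin 7)

/-- The total pip sum of the tiles on a board. -/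
def boardPips (b : Board) : ℕ := (b.map fun p => (p.1 : ℕ) + (p.2 : ℕ)).sum

/-- A tile `t` can extend a (nonempty) board `b` when `t` contains one of the two
open ends of `b`. -/
def canExtend (b : Board) (t : Tile) : Prop :=
  b ≠ [] ∧ (b.head!.1 ∈ t ∨ b.getLast!.2 ∈ t)

/-- The total pip sum of a hand of tiles. -/
def handPips (h : Finset Tile) : ℕ := ∑ t ∈ h, pips t

/-- A game state: the board of already played tiles, the four remaining hands, and
whose turn it is. -/
structure GState where
  board : Board
  hands : Fin 4 → Finset Tile
  turn : Fin 4

/-- Players `0` and `2` form team `false`; players `1` and `3` form team `true`. -/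
def playerTeam (i : Fin 4) : Bool := decide ((i : ℕ) % 2 = 1)

/-- The total pip sum remaining in the hands of the two players of a team. -/
def GState.teamPips (s : GState) (tm : Bool) : ℕ :=
  if tm then handPips (s.hands 1) + handPips (s.hands 3)
  else handPips (s.hands 0) + handPips (s.hands 2)

/-- A single legal move of the game (the game is still running, i.e. all hands are
nonempty).  The player to move either plays a tile from their hand — the first tile
played starts the chain, and every later tile is appended, suitably oriented, to one
of the two open ends of the chain — or passes, which is permitted only if no tile
remaining in their hand contains either open end of the chain. -/
inductive Step : GState → GState → Prop
  | playFirst (s : GState) (p : Fin 7 × Fin 7)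
      (hrun : ∀ i, s.hands i ≠ ∅)
      (hb : s.board = [])
      (ht : Sym2.mk p.1 p.2 ∈ s.hands s.turn) :
      Step s ⟨[p],
        Function.update s.hands s.turn ((s.hands s.turn).erase (Sym2.mk p.1 p.2)),
        s.turn + 1⟩
  | playLeft (s : GState) (p : Fin 7 × Fin 7)
      (hrun : ∀ i, s.hands i ≠ ∅)
      (hb : s.board ≠ [])
      (ht : Sym2.mk p.1 p.2 ∈ s.hands s.turn)
      (hfit : p.2 = s.board.head!.1) :
      Step s ⟨p :: s.board,
        Function.update s.hands s.turn ((s.hands s.turn).erase (Sym2.mk p.1 p.2)),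
        s.turn + 1⟩
  | playRight (s : GState) (p : Fin 7 × Fin 7)
      (hrun : ∀ i, s.hands i ≠ ∅)
      (hb : s.board ≠ [])
      (ht : Sym2.mk p.1 p.2 ∈ s.hands s.turn)
      (hfit : p.1 = s.board.getLast!.2) :
      Step s ⟨s.board ++ [p],
        Function.update s.hands s.turn ((s.hands s.turn).erase (Sym2.mk p.1 p.2)),
        s.turn + 1⟩
  | pass (s : GState)
      (hrun : ∀ i, s.hands i ≠ ∅)
      (hb : s.board ≠ [])
      (hcant : ∀ t ∈ s.hands s.turn, ¬ canExtend s.board t) :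
      Step s ⟨s.board, s.hands, s.turn + 1⟩

/-- A four-player partnership domino game: a partition of the 28 domino tiles into
four initial hands of 7 tiles each, together with a legal play sequence of states;
player 1 (index `0`) moves first, and players move cyclically. -/
structure Game where
  initHands : Fin 4 → Finset Tile
  card_initHands : ∀ i, (initHands i).card = 7
  disj_initHands : ∀ i j, i ≠ j → Disjoint (initHands i) (initHands j)
  cover_initHands : ∀ t : Tile, ∃ i, t ∈ initHands i
  states : List GState
  states_ne : states ≠ []
  head_states : states.head states_ne = ⟨[], initHands, 0⟩
  chain_states : states.Chain' Step

/-- The final position of a game. -/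
def Game.finalState (g : Game) : GState := g.states.getLast g.states_ne

/-- A position is blocked if at least one tile has been played and no player's
remaining hand contains a tile containing either open end of the chain. -/
def IsBlocked (s : GState) : Prop :=
  s.board ≠ [] ∧ ∀ i : Fin 4, ∀ t ∈ s.hands i, ¬ canExtend s.board t

/-- A game ends blocked if its final position is blocked. -/
def Game.EndsBlocked (g : Game) : Prop := IsBlocked g.finalState

/-- Team `tm` plays at least one tile during the game: at some turn the player to move
belongs to team `tm` and the board changes (a tile is placed). -/
def Game.teamPlays (g : Game) (tm : Bool) : Prop :=
  ∃ (i : ℕ) (h : i + 1 < g.states.length),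
    playerTeam ((g.states.get ⟨i, by omega⟩).turn) = tm ∧
    (g.states.get ⟨i + 1, h⟩).board ≠ (g.states.get ⟨i, by omega⟩).board

/-!
Player 1 leads 0-5, player 2 follows with 5-6 and player 3 with 6-0. From then on one open end
stays 0, which players 2 and 4 do not hold, and the other is always a value the next of them to
move lacks, so they pass while players 1 and 3 play out the rest of the 0 suit. The double 0
closes the chain with 0 at both ends and no 0 left in any hand: the game is blocked, players 1
and 3 keep 7 + 12 = 19 pips and players 2 and 4 keep 50 + 57 = 107.
-/

instance (b : Board) (t : Tile) : Decidable (canExtend b t) := by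
  unfold canExtend; infer_instance

instance (s : GState) : Decidable (IsBlocked s) := by
  unfold IsBlocked; infer_instance

inductive Move
  | left (p : Fin 7 × Fin 7)
  | right (p : Fin 7 × Fin 7)
  | pass

namespace GState

def IsRunning (s : GState) : Prop := ∀ i, s.hands i ≠ ∅

def afterPlaying (s : GState) (b : Board) (p : Fin 7 × Fin 7) : GState :=
  ⟨b, Function.update s.hands s.turn ((s.hands s.turn).erase s(p.1, p.2)), s.turn + 1⟩

def next (s : GState) : Move → GState
  | .left p => s.afterPlaying (p :: s.board) p
  | .right p => s.afterPlaying (s.board ++ [p]) p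
  | .pass => ⟨s.board, s.hands, s.turn + 1⟩

def Legal (s : GState) : Move → Prop
  | .left p => s.IsRunning ∧ s(p.1, p.2) ∈ s.hands s.turn ∧
      (s.board = [] ∨ p.2 = s.board.head!.1)
  | .right p => s.IsRunning ∧ s(p.1, p.2) ∈ s.hands s.turn ∧
      (s.board = [] ∨ p.1 = s.board.getLast!.2)
  | .pass => s.IsRunning ∧ s.board ≠ [] ∧ ∀ t ∈ s.hands s.turn, ¬ canExtend s.board t

instance (s : GState) (m : Move) : Decidable (s.Legal m) := by
  cases m <;> unfold Legal IsRunning <;> infer_instance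

theorem step_next {s : GState} {m : Move} (h : s.Legal m) : Step s (s.next m) := by
  cases m with
  | left p =>
    obtain ⟨hrun, ht, hfit⟩ := h
    by_cases hb : s.board = []
    · simpa [next, afterPlaying, hb] using Step.playFirst s p hrun hb ht
    · exact Step.playLeft s p hrun hb ht (hfit.resolve_left hb)
  | right p =>
    obtain ⟨hrun, ht, hfit⟩ := h
    by_cases hb : s.board = []
    · simpa [next, afterPlaying, hb] using Step.playFirst s p hrun hb ht
    · exact Step.playRight s p hrun hb ht (hfit.resolve_left hb)
  | pass => exact Step.pass s h.1 h.2.1 h.2.2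

def LegalRun (s : GState) : List Move → Prop
  | [] => True
  | m :: ms => s.Legal m ∧ LegalRun (s.next m) ms

instance decidableLegalRun : ∀ (s : GState) (ms : List Move), Decidable (s.LegalRun ms)
  | _, [] => isTrue trivial
  | s, m :: ms =>
    haveI := decidableLegalRun (s.next m) ms
    inferInstanceAs (Decidable (_ ∧ _))

def run (s : GState) : List Move → List GState
  | [] => [s]
  | m :: ms => s :: run (s.next m) ms

theorem run_ne_nil (s : GState) (ms : List Move) : s.run ms ≠ [] := by
  cases ms <;> simp [run]

theorem head_run (s : GState) (ms : List Move) : (s.run ms).head (run_ne_nil s ms) = s := by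
  cases ms <;> rfl

theorem getLast_run (s : GState) (ms : List Move) :
    (s.run ms).getLast (run_ne_nil s ms) = ms.foldl next s := by
  induction ms generalizing s with
  | nil => rfl
  | cons m ms ih =>
    simp only [run, List.foldl_cons]
    rw [List.getLast_cons (run_ne_nil _ _), ih]

theorem head?_run (s : GState) (ms : List Move) : (s.run ms).head? = some s := by
  cases ms <;> rfl

theorem isChain_run {s : GState} {ms : List Move} (h : s.LegalRun ms) :
    (s.run ms).IsChain Step := by
  induction ms generalizing s with
  | nil => exact List.IsChain.singleton s
  | cons m ms ih =>
    obtain ⟨hm, hms⟩ := h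
    exact List.isChain_cons.2 ⟨by simpa [head?_run] using step_next hm, ih hms⟩

end GState

section OfMoves

variable (H : Fin 4 → Finset Tile) (hcard : ∀ i, (H i).card = 7)
  (hdisj : ∀ i j, i ≠ j → Disjoint (H i) (H j)) (hcover : ∀ t : Tile, ∃ i, t ∈ H i)
  (ms : List Move) (hms : GState.LegalRun ⟨[], H, 0⟩ ms)

def Game.ofMoves : Game where
  initHands := H
  card_initHands := hcard
  disj_initHands := hdisj
  cover_initHands := hcover
  states := GState.run ⟨[], H, 0⟩ ms
  states_ne := GState.run_ne_nil _ _
  head_states := GState.head_run _ _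
  chain_states := GState.isChain_run hms

theorem Game.finalState_ofMoves :
    (Game.ofMoves H hcard hdisj hcover ms hms).finalState = ms.foldl GState.next ⟨[], H, 0⟩ :=
  GState.getLast_run _ _

end OfMoves

def deal : Fin 4 → Finset Tile :=
  ![{s(0, 0), s(0, 1), s(0, 3), s(0, 5), s(1, 1), s(2, 3), s(2, 4)},
    {s(1, 5), s(1, 6), s(2, 5), s(2, 6), s(5, 5), s(5, 6), s(6, 6)},
    {s(0, 2), s(0, 4), s(0, 6), s(1, 2), s(1, 3), s(1, 4), s(2, 2)},
    {s(3, 3), s(3, 4), s(3, 5), s(3, 6), s(4, 4), s(4, 5), s(4, 6)}]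

def blockingMoves : List Move :=
  [.right (0, 5), .right (5, 6), .right (6, 0), .pass,
   .right (0, 3), .pass, .right (3, 1), .pass,
   .right (1, 0), .pass, .right (0, 2), .pass,
   .right (2, 4), .pass, .right (4, 0), .pass,
   .right (0, 0)]

theorem exists_blocked_game_score_107 :
    ∃ (g : Game) (tm : Bool),
      g.EndsBlocked ∧
      g.finalState.teamPips tm < g.finalState.teamPips (!tm) ∧
      g.finalState.teamPips (!tm) = 107 := by
  let g := Game.ofMoves deal (by decide) (by decide) (by decide) blockingMoves (by decide)
  have hfinal : g.finalState = blockingMoves.foldl GState.next ⟨[], deal, 0⟩ :=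
    Game.finalState_ofMoves ..
  refine ⟨g, false, ?_, ?_, ?_⟩ <;> simp only [Game.EndsBlocked, hfinal] <;> decide
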